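/- Let L be a finite tree language over a ranked alphabet Σ. Then the formal tree series realized by the SubTree automaton STAut_L equals SubTreeSeries_L; that is, for every tree t over Σ, ν(Δ(t)) = SubTreeSeries_L(t). -/

import Mathlib

/-- Trees over a ranked alphabet `σ` with arity function `ar`:
`t = f(t₁,…,t_k)` where `k = ar f`. -/
inductive RTree (σ : Type) (ar : σ → ℕ) : Type where
  | node : (f : σ) → (Fin (ar f) → RTree σ ar) → RTree σ ar

variable {σ : Type} {ar : σ → ℕ}

/-- Number of nodes of a tree. -/
def RTree.size : RTree σ ar → ℕ
  | .node _ ts => 1 + ∑ i, (ts i).size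

/-- The set `SubTree(t)` of subtrees of a tree. -/
def RTree.subTree : RTree σ ar → Set (RTree σ ar)
  | .node f ts => insert (.node f ts) (⋃ i, (ts i).subTree)

open Classical in
/-- `SubTreeSeries_t`: the indicator of the whole tree plus the sum of the
series of its immediate subtrees. -/
noncomputable def RTree.subTreeSeries : RTree σ ar → RTree σ ar → ℕ
  | .node f ts, s => (if s = .node f ts then 1 else 0) + ∑ i, (ts i).subTreeSeries s

/-- The subtree of `t` rooted at position `p` (a node given by a list of child
indices), if `p` is indeed a node of `t`. -/
def RTree.subtreeAt : RTree σ ar → List ℕ → Option (RTree σ ar)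
  | t, [] => some t
  | .node f ts, i :: p => if h : i < ar f then (ts ⟨i, h⟩).subtreeAt p else none

/-- `SubTreeSet(L) = ⋃_{t ∈ L} SubTree(t)` for a finite tree language `L`. -/
def subTreeSet (L : Finset (RTree σ ar)) : Set (RTree σ ar) := ⋃ t ∈ L, t.subTree

/-- `SubTreeSeries_L = ∑_{t ∈ L} SubTreeSeries_t`. -/
noncomputable def subTreeSeriesL (L : Finset (RTree σ ar)) (s : RTree σ ar) : ℕ :=
  ∑ t ∈ L, t.subTreeSeries s

/-- The SubTree kernel of two finite tree languages:
`∑_t SubTreeSeries_X(t) · SubTreeSeries_Y(t)` (finitely supported sum). -/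
noncomputable def subTreeKernel (X Y : Finset (RTree σ ar)) : ℕ :=
  ∑ᶠ t, subTreeSeriesL X t * subTreeSeriesL Y t

theorem RTree.subTree_finite (t : RTree σ ar) : t.subTree.Finite := by
  induction t with
  | node f ts ih =>
    rw [RTree.subTree]
    exact (Set.finite_iUnion ih).insert _

theorem subTreeSet_finite (L : Finset (RTree σ ar)) : (subTreeSet L).Finite :=
  Set.Finite.biUnion L.finite_toSet fun t _ => t.subTree_finite

/-- A Root-Weighted Tree Automaton with weights in `M`:
a finite state type `Q`, a root weight function `ν`, and a transition relation `δ`,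
where `δ f q qs` means `(q, f, qs 1, …, qs k) ∈ δ` (with `k = ar f`). -/
structure RWTA (σ : Type) (ar : σ → ℕ) (M : Type) where
  Q : Type
  finQ : Finite Q
  ν : Q → M
  δ : (f : σ) → Q → (Fin (ar f) → Q) → Prop

variable {M : Type}

/-- The set of states reached on a tree:
`Δ(f(t₁,…,t_k)) = δ(f, Δ(t₁), …, Δ(t_k))`. -/
def RWTA.Δ (A : RWTA σ ar M) : RTree σ ar → Set A.Q
  | .node f ts => {q | ∃ qs, A.δ f q qs ∧ ∀ i, qs i ∈ A.Δ (ts i)}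

/-- The formal tree series realized by an RWTA: `P_A(t) = ∑_{q ∈ Δ(t)} ν(q)`
(equal to `0` when `Δ(t) = ∅`). -/
noncomputable def RWTA.P [AddCommMonoid M] (A : RWTA σ ar M) (t : RTree σ ar) : M :=
  ∑ᶠ q ∈ A.Δ t, A.ν q

/-- The SubTree automaton `STAut_L` of a finite tree language `L`: states are the
elements of `SubTreeSet(L)`, root weight of a state `t` is `SubTreeSeries_L(t)`, and
the transitions are `(f(t₁,…,t_k), f, t₁, …, t_k)` for states `f(t₁,…,t_k)`. -/
noncomputable def STAut (L : Finset (RTree σ ar)) : RWTA σ ar ℕ where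
  Q := ↥(subTreeSet L)
  finQ := (subTreeSet_finite L).to_subtype
  ν q := subTreeSeriesL L q.1
  δ f q qs := (q : RTree σ ar) = .node f fun i => (qs i : RTree σ ar)

/-- The product RWTA `A ⊙ B`: states `Q_A × Q_B`, componentwise transitions, and
root weights `ν((p,q)) = ν_A(p) · ν_B(q)`. -/
def RWTA.prod [Mul M] (A B : RWTA σ ar M) : RWTA σ ar M where
  Q := A.Q × B.Q
  finQ := by have := A.finQ; have := B.finQ; exact inferInstance
  ν pq := A.ν pq.1 * B.ν pq.2
  δ f pq qs := A.δ f pq.1 (fun i => (qs i).1) ∧ B.δ f pq.2 fun i => (qs i).2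

theorem RTree.mem_subTree_self (t : RTree σ ar) : t ∈ t.subTree := by
  cases t with
  | node f ts => rw [RTree.subTree]; exact Set.mem_insert _ _

theorem RTree.subTree_trans {u v w : RTree σ ar} (huv : u ∈ v.subTree)
    (hvw : v ∈ w.subTree) : u ∈ w.subTree := by
  induction w with
  | node f ts ih =>
    rw [RTree.subTree] at hvw ⊢
    rcases hvw with h | h
    · subst h; rw [RTree.subTree] at huv; exact huv
    · rcases Set.mem_iUnion.1 h with ⟨i, hi⟩
      exact Set.mem_insert_iff.2 (Or.inr (Set.mem_iUnion.2 ⟨i, ih i hi⟩))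

theorem child_mem_subTreeSet {L : Finset (RTree σ ar)} {f : σ}
    {ts : Fin (ar f) → RTree σ ar} (h : RTree.node f ts ∈ subTreeSet L)
    (i : Fin (ar f)) : ts i ∈ subTreeSet L := by
  rcases Set.mem_iUnion₂.1 h with ⟨s, hs, hsub⟩
  refine Set.mem_iUnion₂.2 ⟨s, hs, RTree.subTree_trans ?_ hsub⟩
  rw [RTree.subTree]
  exact Set.mem_insert_iff.2 (Or.inr (Set.mem_iUnion.2 ⟨i, (ts i).mem_subTree_self⟩))

theorem RTree.subTreeSeries_eq_zero {s t : RTree σ ar} (h : t ∉ s.subTree) :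
    s.subTreeSeries t = 0 := by
  induction s with
  | node f ts ih =>
    rw [RTree.subTree, Set.mem_insert_iff] at h
    rw [RTree.subTreeSeries]
    push_neg at h
    rw [if_neg h.1, Finset.sum_eq_zero fun i _ =>
      ih i (fun hm => h.2 (Set.mem_iUnion.2 ⟨i, hm⟩))]
    simp

theorem subTreeSeriesL_eq_zero {L : Finset (RTree σ ar)} {t : RTree σ ar}
    (h : t ∉ subTreeSet L) : subTreeSeriesL L t = 0 :=
  Finset.sum_eq_zero fun s hs => RTree.subTreeSeries_eq_zero fun hm =>
    h (Set.mem_iUnion₂.2 ⟨s, hs, hm⟩)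

theorem STAut_Δ (L : Finset (RTree σ ar)) (t : RTree σ ar) :
    (STAut L).Δ t = {q : ↥(subTreeSet L) | (q : RTree σ ar) = t} := by
  induction t with
  | node f ts ih =>
    ext q
    simp only [RWTA.Δ, Set.mem_setOf_eq]
    constructor
    · rintro ⟨qs, hq, hqs⟩
      simp only [STAut] at hq
      simp only [ih, Set.mem_setOf_eq] at hqs
      show Subtype.val q = RTree.node f ts
      exact hq.trans (congrArg _ (funext fun i => hqs i))
    · intro hq
      have hmem : RTree.node f ts ∈ subTreeSet L := hq ▸ q.2
      refine ⟨fun i => ⟨ts i, child_mem_subTreeSet hmem i⟩, ?_, fun i => ?_⟩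
      · exact hq
      · rw [ih i]; rfl

/-- The series realized by the SubTree automaton `STAut_L` equals
`SubTreeSeries_L`: for every tree `t`, `ν(Δ(t)) = SubTreeSeries_L(t)`. -/
theorem STAut_realizes_subTreeSeries (L : Finset (RTree σ ar)) (t : RTree σ ar) :
    (STAut L).P t = subTreeSeriesL L t := by
  rw [RWTA.P, STAut_Δ]
  by_cases h : t ∈ subTreeSet L
  · have : {q : ↥(subTreeSet L) | (q : RTree σ ar) = t} = {⟨t, h⟩} := by
      ext q; simp [Subtype.ext_iff]
    rw [this]; exact finsum_mem_singleton
  · have : {q : ↥(subTreeSet L) | (q : RTree σ ar) = t} = ∅ := by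
      ext q; simp only [Set.mem_setOf_eq, Set.mem_empty_iff_false, iff_false]
      rintro rfl; exact h q.2
    rw [this, subTreeSeriesL_eq_zero h]; exact finsum_mem_empty
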